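/- arXiv:1202.4784 — 3 statements merged into one kernel-verified Lean document; each statement's English description precedes it below -/
import Mathlib

section
/- Let 0 < c < 1, let E be a normed vector space over ℝ, and let (A(n))_{n∈ℕ} be a bounded sequence in E satisfying the uniform Cesàro condition: for every ε > 0 there exists L such that ‖(1/(N−M)) Σ_{n=M}^{N−1} A(n)‖ ≤ ε whenever N − M ≥ L. Then lim_{N→∞} ‖(1/N) Σ_{n=1}^{N} A(⌊n^{c}⌋)‖ = 0. -/
/-!
Put `a k = ⌈k ^ (1/c)⌉₊`, so that `⌊n ^ c⌋₊ = k` exactly when `a k ≤ n < a (k + 1)`. Grouping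
the terms by value turns `∑_{n ≤ N} A ⌊n ^ c⌋₊` into `∑_{k < K} w k • A k` plus one incomplete
block, where `K = ⌊N ^ c⌋₊` and `w k = a (k + 1) - a k` differs from `(k + 1) ^ (1/c) - k ^ (1/c)`
by less than `1`. By convexity of `x ^ (1/c)` the weights increase up to rounding errors, so their
total variation is `O(K ^ (1/c - 1) + K) = o(N)`. A weighted sum with weights of small variation
barely changes when `A` is shifted, so it is close to its average over `H` consecutive shifts, and
by the uniform Cesàro condition that average is at most `ε ∑ w k ≤ ε N`.
-/

open Filter Finset

theorem sum_range_smul_sub_succ {R M : Type*} [Ring R] [AddCommGroup M] [Module R M]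
    (w : ℕ → R) (B : ℕ → M) (K : ℕ) :
    ∑ k ∈ range K, w k • (B k - B (k + 1)) =
      w 0 • B 0 - w K • B K + ∑ k ∈ range K, (w (k + 1) - w k) • B (k + 1) := by
  induction K with
  | zero => simp
  | succ K ih =>
    rw [sum_range_succ, ih, sum_range_succ]
    simp only [smul_sub, sub_smul]
    abel

section Window

variable {E : Type*} [SeminormedAddCommGroup E] [NormedSpace ℝ E]

theorem norm_sum_range_smul_sub_succ_le {B : ℕ → E} {C : ℝ} (hB : ∀ n, ‖B n‖ ≤ C)
    (w : ℕ → ℝ) (K : ℕ) :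
    ‖∑ k ∈ range K, w k • (B k - B (k + 1))‖ ≤
      C * (|w 0| + ∑ k ∈ range K, |w (k + 1) - w k| + |w K|) := by
  have hsmul : ∀ (r : ℝ) n, ‖r • B n‖ ≤ |r| * C := fun r n => by
    rw [norm_smul, Real.norm_eq_abs]
    exact mul_le_mul_of_nonneg_left (hB n) (abs_nonneg r)
  have hsum : ‖∑ k ∈ range K, (w (k + 1) - w k) • B (k + 1)‖ ≤
      ∑ k ∈ range K, |w (k + 1) - w k| * C :=
    (norm_sum_le _ _).trans (sum_le_sum fun k _ => hsmul _ _)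
  rw [← sum_mul] at hsum
  rw [sum_range_smul_sub_succ]
  calc _ ≤ ‖w 0 • B 0‖ + ‖w K • B K‖ + ‖∑ k ∈ range K, (w (k + 1) - w k) • B (k + 1)‖ :=
        (norm_add_le _ _).trans (add_le_add_left (norm_sub_le _ _) _)
    _ ≤ |w 0| * C + |w K| * C + (∑ k ∈ range K, |w (k + 1) - w k|) * C := by
        gcongr <;> apply hsmul
    _ = _ := by ring

/- `P i = ∑ w k • A (k + i)`: by Abel summation each shift moves `P` by at most `C` times the
variation of `w`, while the average of `P 0, …, P (H - 1)` is controlled by the window bound. -/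
theorem norm_sum_range_smul_le_of_window {A : ℕ → E} {C ε : ℝ} {H : ℕ} (hA : ∀ n, ‖A n‖ ≤ C)
    (hH : 0 < H) (hwin : ∀ m, ‖∑ h ∈ range H, A (m + h)‖ ≤ H * ε) (w : ℕ → ℝ) (K : ℕ) :
    ‖∑ k ∈ range K, w k • A k‖ ≤
      ε * ∑ k ∈ range K, |w k| + H * C * (|w 0| + ∑ k ∈ range K, |w (k + 1) - w k| + |w K|) := by
  set V := |w 0| + ∑ k ∈ range K, |w (k + 1) - w k| + |w K|
  set P : ℕ → E := fun i => ∑ k ∈ range K, w k • A (k + i)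
  have hstep : ∀ i, dist (P i) (P (i + 1)) ≤ C * V := fun i => by
    rw [dist_eq_norm]
    simpa only [P, ← sum_sub_distrib, ← smul_sub, ← add_assoc, add_right_comm _ 1 i] using
      norm_sum_range_smul_sub_succ_le (B := fun k => A (k + i)) (fun n => hA _) w K
  have hdrift : ∀ h ≤ H, ‖P 0 - P h‖ ≤ H * (C * V) := fun h hh => by
    rw [← dist_eq_norm]
    refine (dist_le_range_sum_of_dist_le (f := P) h fun _ => hstep _).trans ?_
    rw [sum_const, card_range, nsmul_eq_mul]
    exact mul_le_mul_of_nonneg_right (by exact_mod_cast hh) (dist_nonneg.trans (hstep 0))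
  have hmean : ‖∑ h ∈ range H, P h‖ ≤ H * (ε * ∑ k ∈ range K, |w k|) := by
    simp only [P]
    rw [sum_comm, mul_sum, mul_sum]
    refine (norm_sum_le _ _).trans (sum_le_sum fun k _ => ?_)
    rw [← smul_sum, norm_smul, Real.norm_eq_abs]
    simpa only [add_comm k, mul_left_comm (H : ℝ), mul_comm ε] using
      mul_le_mul_of_nonneg_left (hwin k) (abs_nonneg (w k))
  have hsplit : (H : ℝ) • P 0 = ∑ h ∈ range H, P h + ∑ h ∈ range H, (P 0 - P h) := by
    rw [← sum_add_distrib]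
    simp [sum_const, Nat.cast_smul_eq_nsmul]
  have hdrifts : ‖∑ h ∈ range H, (P 0 - P h)‖ ≤ H * (H * (C * V)) := by
    refine (norm_sum_le _ _).trans ?_
    simpa using sum_le_sum fun h hh => hdrift h (mem_range.1 hh).le
  have hHpos : (0 : ℝ) < H := by exact_mod_cast hH
  have : (H : ℝ) * ‖P 0‖ ≤ H * (ε * ∑ k ∈ range K, |w k| + H * C * V) := by
    calc (H : ℝ) * ‖P 0‖ = ‖(H : ℝ) • P 0‖ := by rw [norm_smul, Real.norm_natCast]
      _ ≤ _ := hsplit ▸ norm_add_le _ _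
      _ ≤ _ := add_le_add hmean hdrifts
      _ = _ := by ring
  simpa only [P, add_zero] using le_of_mul_le_mul_left this hHpos

theorem exists_window_of_uniform_cesaro {A : ℕ → E}
    (hCes : ∀ ε : ℝ, 0 < ε → ∃ L : ℕ, ∀ M N : ℕ, M + L ≤ N →
      ‖((N : ℝ) - (M : ℝ))⁻¹ • ∑ n ∈ Finset.Ico M N, A n‖ ≤ ε) {ε : ℝ} (hε : 0 < ε) :
    ∃ H : ℕ, 0 < H ∧ ∀ m, ‖∑ h ∈ range H, A (m + h)‖ ≤ H * ε := by
  obtain ⟨L, hL⟩ := hCes ε hε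
  refine ⟨L + 1, L.succ_pos, fun m => ?_⟩
  have h := hL m (m + (L + 1)) (by omega)
  rw [sum_Ico_eq_sum_range, add_tsub_cancel_left, norm_smul, Nat.cast_add, add_sub_cancel_left,
    norm_inv, Real.norm_natCast, inv_mul_le_iff₀ (by positivity)] at h
  exact h

end Window

namespace GaloisConnection

variable {l u : ℕ → ℕ}

theorem u_eq_of_le_of_lt (gc : GaloisConnection l u) {k n : ℕ} (h₁ : l k ≤ n)
    (h₂ : n < l (k + 1)) : u n = k := by
  have := (gc k n).1 h₁
  have := mt (gc (k + 1) n).2 (not_le.2 h₂)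
  omega

theorem lt_l_u_succ (gc : GaloisConnection l u) (n : ℕ) : n < l (u n + 1) :=
  not_le.1 fun h => (u n).lt_succ_self.not_ge ((gc _ n).1 h)

variable {M : Type*} [AddCommMonoid M] (f : ℕ → M)

theorem sum_range_l_comp_u (gc : GaloisConnection l u) (K : ℕ) :
    ∑ n ∈ range (l K), f (u n) = ∑ k ∈ range K, (l (k + 1) - l k) • f k := by
  induction K with
  | zero => simp [show l 0 = 0 from gc.l_bot]
  | succ K ih =>
    rw [← sum_range_add_sum_Ico _ (gc.monotone_l K.le_succ), ih, sum_range_succ,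
      sum_congr rfl fun n hn => congrArg f (gc.u_eq_of_le_of_lt (mem_Ico.1 hn).1 (mem_Ico.1 hn).2),
      sum_const, Nat.card_Ico]

theorem sum_range_succ_comp_u (gc : GaloisConnection l u) (N : ℕ) :
    ∑ n ∈ range (N + 1), f (u n) =
      ∑ k ∈ range (u N), (l (k + 1) - l k) • f k + (N + 1 - l (u N)) • f (u N) := by
  have hu : ∀ n ∈ Ico (l (u N)) (N + 1), f (u n) = f (u N) := fun n hn =>
    congrArg f (gc.u_eq_of_le_of_lt (mem_Ico.1 hn).1
      ((Nat.lt_succ_iff.1 (mem_Ico.1 hn).2).trans_lt (gc.lt_l_u_succ N)))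
  rw [← sum_range_add_sum_Ico _ (Nat.le_succ_of_le (gc.l_u_le N)), gc.sum_range_l_comp_u,
    sum_congr rfl hu, sum_const, Nat.card_Ico]

end GaloisConnection

theorem gc_ceil_rpow_inv_floor_rpow {c : ℝ} (hc : 0 < c) :
    GaloisConnection (fun k : ℕ => ⌈(k : ℝ) ^ c⁻¹⌉₊) (fun n : ℕ => ⌊(n : ℝ) ^ c⌋₊) :=
  fun k n => by
    rw [Nat.ceil_le, Nat.le_floor_iff (by positivity)]
    exact Real.rpow_inv_le_iff_of_pos k.cast_nonneg n.cast_nonneg hc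

theorem sum_range_abs_sub_le_of_le_add {w : ℕ → ℝ} {δ : ℝ} (hδ : 0 ≤ δ) {K : ℕ}
    (hw : ∀ k < K, w k ≤ w (k + 1) + δ) :
    ∑ k ∈ range K, |w (k + 1) - w k| ≤ w K - w 0 + 2 * K * δ := by
  calc ∑ k ∈ range K, |w (k + 1) - w k| ≤ ∑ k ∈ range K, (w (k + 1) - w k + 2 * δ) :=
        sum_le_sum fun k hk => abs_le'.2 ⟨by linarith, by linarith [hw k (mem_range.1 hk)]⟩
    _ = w K - w 0 + 2 * K * δ := by
        rw [sum_add_distrib, sum_range_sub, sum_const, card_range, nsmul_eq_mul]; ring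

theorem monotone_rpow_add_one_sub_rpow {p : ℝ} (hp : 1 ≤ p) :
    Monotone fun k : ℕ => ((k : ℝ) + 1) ^ p - (k : ℝ) ^ p := by
  refine monotone_nat_of_le_succ fun k => ?_
  have := (convexOn_rpow hp).slope_mono_adjacent (x := k) (y := k + 1) (z := k + 2)
    (Set.mem_Ici.2 k.cast_nonneg) (Set.mem_Ici.2 (by positivity)) (by linarith) (by linarith)
  simp only [add_sub_cancel_left, div_one, show (k : ℝ) + 2 - (k + 1) = 1 by ring] at this
  push_cast
  rwa [show (k : ℝ) + 1 + 1 = k + 2 by ring]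

/-- `ceilRpowGap c⁻¹ k` is the number of `n` with `⌊n ^ c⌋₊ = k`. -/
noncomputable def ceilRpowGap (p : ℝ) (k : ℕ) : ℝ := ⌈((k + 1 : ℕ) : ℝ) ^ p⌉₊ - ⌈(k : ℝ) ^ p⌉₊

namespace ceilRpowGap

variable {p : ℝ}

theorem abs_sub_lt (k : ℕ) : |ceilRpowGap p k - (((k : ℝ) + 1) ^ p - (k : ℝ) ^ p)| < 1 := by
  have h₀ := Nat.le_ceil ((k : ℝ) ^ p)
  have h₁ := Nat.le_ceil (((k + 1 : ℕ) : ℝ) ^ p)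
  have h₂ := Nat.ceil_lt_add_one (by positivity : (0 : ℝ) ≤ (k : ℝ) ^ p)
  have h₃ := Nat.ceil_lt_add_one (by positivity : (0 : ℝ) ≤ ((k + 1 : ℕ) : ℝ) ^ p)
  push_cast at h₁ h₃
  rw [ceilRpowGap, abs_lt]
  push_cast
  constructor <;> linarith

theorem nonneg (hp : 0 ≤ p) (k : ℕ) : 0 ≤ ceilRpowGap p k :=
  sub_nonneg.2 (Nat.cast_le.2 (Nat.ceil_mono
    (Real.rpow_le_rpow k.cast_nonneg (Nat.cast_le.2 k.le_succ) hp)))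

theorem le_succ_add_two (hp : 1 ≤ p) (k : ℕ) : ceilRpowGap p k ≤ ceilRpowGap p (k + 1) + 2 := by
  have h := monotone_rpow_add_one_sub_rpow hp k.le_succ
  have h₀ := abs_lt.1 (abs_sub_lt (p := p) k)
  have h₁ := abs_lt.1 (abs_sub_lt (p := p) (k + 1))
  push_cast at h h₁
  linarith [h₀.2, h₁.1]

theorem sum_range (hp : 0 < p) (K : ℕ) : ∑ k ∈ range K, ceilRpowGap p k = ⌈(K : ℝ) ^ p⌉₊ := by
  have := sum_range_sub (fun k : ℕ => (⌈(k : ℝ) ^ p⌉₊ : ℝ)) K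
  simpa [ceilRpowGap, Real.zero_rpow hp.ne'] using this

theorem variation_le (hp : 1 ≤ p) (K : ℕ) :
    |ceilRpowGap p 0| + ∑ k ∈ range K, |ceilRpowGap p (k + 1) - ceilRpowGap p k| +
      |ceilRpowGap p K| ≤ 2 * ceilRpowGap p K + 4 * K := by
  have := sum_range_abs_sub_le_of_le_add zero_le_two fun k (_ : k < K) => le_succ_add_two hp k
  rw [abs_of_nonneg (nonneg (by linarith) 0), abs_of_nonneg (nonneg (by linarith) K)]
  linarith

end ceilRpowGap

open Topology in
theorem tendsto_rpow_add_one_sub_rpow_add_div_rpow {p : ℝ} (hp : 1 < p) :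
    Tendsto (fun x : ℝ => ((x + 1) ^ p - x ^ p + x + 2) / x ^ p) atTop (𝓝 0) := by
  have hlim : Tendsto (fun x : ℝ => ((1 + x⁻¹) ^ p - 1) + x ^ (-(p - 1)) + 2 * x ^ (-p))
      atTop (𝓝 ((((1 : ℝ) + 0) ^ p - 1) + 0 + 2 * 0)) :=
    ((((tendsto_inv_atTop_zero.const_add 1).rpow_const (Or.inl (by norm_num))).sub_const 1).add
      (tendsto_rpow_neg_atTop (by linarith))).add
      ((tendsto_rpow_neg_atTop (by linarith)).const_mul 2)
  simp only [add_zero, Real.one_rpow, sub_self, mul_zero] at hlim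
  refine hlim.congr' (eventually_gt_atTop 0 |>.mono fun x hx => ?_)
  have hxp : 0 < x ^ p := Real.rpow_pos_of_pos hx p
  rw [neg_sub, Real.rpow_sub hx, Real.rpow_one, Real.rpow_neg hx.le,
    show 1 + x⁻¹ = (x + 1) / x by field_simp, Real.div_rpow (by linarith) hx.le]
  field_simp

theorem sum_Icc_floor_rpow_eq {M : Type*} [AddCommGroup M] [Module ℝ M] {c : ℝ} (hc : 0 < c)
    (f : ℕ → M) (N : ℕ) :
    f 0 + ∑ n ∈ Icc 1 N, f ⌊(n : ℝ) ^ c⌋₊ =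
      ∑ k ∈ range ⌊(N : ℝ) ^ c⌋₊, ceilRpowGap c⁻¹ k • f k +
        (N + 1 - ⌈(⌊(N : ℝ) ^ c⌋₊ : ℝ) ^ c⁻¹⌉₊) • f ⌊(N : ℝ) ^ c⌋₊ := by
  have gc := gc_ceil_rpow_inv_floor_rpow hc
  have h0 : f 0 = f ⌊((0 : ℕ) : ℝ) ^ c⌋₊ := by simp [Real.zero_rpow hc.ne']
  rw [h0, ← sum_insert (f := fun n : ℕ => f ⌊(n : ℝ) ^ c⌋₊) (by simp),
    ← zero_add 1, insert_Icc_add_one_left_eq_Icc N.zero_le, ← Nat.range_succ_eq_Icc_zero,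
    gc.sum_range_succ_comp_u]
  congr 1
  refine sum_congr rfl fun k _ => ?_
  rw [← Nat.cast_smul_eq_nsmul ℝ, Nat.cast_sub (gc.monotone_l k.le_succ)]
  rfl

section FloorRpow

variable {E : Type*} [SeminormedAddCommGroup E] [NormedSpace ℝ E]

theorem norm_sum_Icc_floor_rpow_le {c : ℝ} (hc0 : 0 < c) (hc1 : c ≤ 1) {A : ℕ → E} {C ε : ℝ}
    {H : ℕ} (hA : ∀ n, ‖A n‖ ≤ C) (hH : 0 < H)
    (hwin : ∀ m, ‖∑ h ∈ range H, A (m + h)‖ ≤ H * ε) (N : ℕ) :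
    let K : ℝ := ⌊(N : ℝ) ^ c⌋₊
    ‖∑ n ∈ Icc 1 N, A ⌊(n : ℝ) ^ c⌋₊‖ ≤ ε * N + 4 * H * C * ((K + 1) ^ c⁻¹ - K ^ c⁻¹ + K + 2) := by
  intro _
  have gc := gc_ceil_rpow_inv_floor_rpow hc0
  have hp : 1 ≤ c⁻¹ := (one_le_inv₀ hc0).2 hc1
  set K := ⌊(N : ℝ) ^ c⌋₊
  set g := ceilRpowGap c⁻¹
  have hlK : ⌈(K : ℝ) ^ c⁻¹⌉₊ ≤ N := gc.l_u_le N
  have hH1 : (1 : ℝ) ≤ H := by exact_mod_cast hH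
  have hC : 0 ≤ C := (norm_nonneg _).trans (hA 0)
  have hε : 0 ≤ ε := nonneg_of_mul_nonneg_right ((norm_nonneg _).trans (hwin 0)) (by positivity)
  have htail : ((N + 1 - ⌈(K : ℝ) ^ c⁻¹⌉₊ : ℕ) : ℝ) ≤ g K := by
    have h := gc.lt_l_u_succ N
    simp only [g, ceilRpowGap]
    rw [Nat.cast_sub (by omega)]
    push_cast at h ⊢
    have : (N : ℝ) + 1 ≤ ⌈((K : ℝ) + 1) ^ c⁻¹⌉₊ := by exact_mod_cast h
    linarith
  have hgK : g K ≤ ((K : ℝ) + 1) ^ c⁻¹ - (K : ℝ) ^ c⁻¹ + 1 := by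
    linarith [(abs_lt.1 (ceilRpowGap.abs_sub_lt (p := c⁻¹) K)).2]
  have hD : 0 ≤ ((K : ℝ) + 1) ^ c⁻¹ - (K : ℝ) ^ c⁻¹ :=
    sub_nonneg.2 (Real.rpow_le_rpow K.cast_nonneg (by linarith) (by linarith))
  have hg := ceilRpowGap.nonneg (p := c⁻¹) (by linarith)
  have hmass : ∑ k ∈ range K, |g k| ≤ N := by
    simp only [abs_of_nonneg (hg _), g, ceilRpowGap.sum_range (by linarith : (0 : ℝ) < c⁻¹)]
    exact_mod_cast hlK
  have hHC : 0 ≤ (H : ℝ) * C := by positivity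
  have hhead := (norm_sum_range_smul_le_of_window hA hH hwin g K).trans (add_le_add
    (mul_le_mul_of_nonneg_left hmass hε)
    (mul_le_mul_of_nonneg_left (ceilRpowGap.variation_le hp K) hHC))
  have htailnorm : ‖(N + 1 - ⌈(K : ℝ) ^ c⁻¹⌉₊) • A K‖ ≤ g K * C := by
    rw [← Nat.cast_smul_eq_nsmul ℝ, norm_smul, Real.norm_natCast]
    exact mul_le_mul htail (hA K) (norm_nonneg _) (hg K)
  calc ‖∑ n ∈ Icc 1 N, A ⌊(n : ℝ) ^ c⌋₊‖
      = ‖∑ k ∈ range K, g k • A k + (N + 1 - ⌈(K : ℝ) ^ c⁻¹⌉₊) • A K - A 0‖ := by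
        rw [← sum_Icc_floor_rpow_eq hc0, add_sub_cancel_left]
    _ ≤ ‖∑ k ∈ range K, g k • A k‖ + ‖(N + 1 - ⌈(K : ℝ) ^ c⁻¹⌉₊) • A K‖ + C :=
        (norm_sub_le _ _).trans (add_le_add (norm_add_le _ _) (hA _))
    _ ≤ ε * N + H * C * (2 * g K + 4 * K) + g K * C + C := by gcongr
    _ ≤ _ := by
        nlinarith [mul_le_mul_of_nonneg_left hgK hHC, mul_le_mul_of_nonneg_left hgK hC,
          mul_nonneg hHC hD, mul_nonneg hC hD, mul_nonneg hHC (K.cast_nonneg : (0 : ℝ) ≤ K)]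

theorem norm_inv_smul_sum_Icc_floor_rpow_le {c : ℝ} (hc0 : 0 < c) (hc1 : c ≤ 1) {A : ℕ → E}
    {C ε : ℝ} {H : ℕ} (hA : ∀ n, ‖A n‖ ≤ C) (hH : 0 < H)
    (hwin : ∀ m, ‖∑ h ∈ range H, A (m + h)‖ ≤ H * ε) {N : ℕ} (hN : 1 ≤ ⌊(N : ℝ) ^ c⌋₊) :
    let K : ℝ := ⌊(N : ℝ) ^ c⌋₊
    ‖(N : ℝ)⁻¹ • ∑ n ∈ Icc 1 N, A ⌊(n : ℝ) ^ c⌋₊‖ ≤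
      ε + 4 * H * C * (((K + 1) ^ c⁻¹ - K ^ c⁻¹ + K + 2) / K ^ c⁻¹) := by
  intro K
  have hC : 0 ≤ C := (norm_nonneg _).trans (hA 0)
  have hKpos : 0 < K ^ c⁻¹ := Real.rpow_pos_of_pos (by simp only [K]; exact_mod_cast hN) _
  have hKN : K ^ c⁻¹ ≤ N :=
    (Nat.le_ceil _).trans (by exact_mod_cast (gc_ceil_rpow_inv_floor_rpow hc0).l_u_le N)
  have hE : 0 ≤ (K + 1) ^ c⁻¹ - K ^ c⁻¹ + K + 2 := by
    have : K ^ c⁻¹ ≤ (K + 1) ^ c⁻¹ :=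
      Real.rpow_le_rpow (by positivity) (by linarith) (by positivity)
    have : 0 ≤ K := by positivity
    linarith
  have hNpos : (0 : ℝ) < N := hKpos.trans_le hKN
  have hX : 0 ≤ 4 * H * C * ((K + 1) ^ c⁻¹ - K ^ c⁻¹ + K + 2) := mul_nonneg (by positivity) hE
  have hXN : 4 * H * C * ((K + 1) ^ c⁻¹ - K ^ c⁻¹ + K + 2) ≤
      N * (4 * H * C * (((K + 1) ^ c⁻¹ - K ^ c⁻¹ + K + 2) / K ^ c⁻¹)) := by
    rw [← mul_div_assoc, mul_div_assoc', le_div_iff₀ hKpos, mul_comm (N : ℝ)]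
    exact mul_le_mul_of_nonneg_left hKN hX
  rw [norm_smul, norm_inv, Real.norm_natCast, inv_mul_le_iff₀ hNpos, mul_add, mul_comm (N : ℝ) ε]
  exact (norm_sum_Icc_floor_rpow_le hc0 hc1 hA hH hwin N).trans (add_le_add_right hXN _)

end FloorRpow

/-- Let `0 < c < 1` and let `(A(n))` be a bounded sequence in a normed
space satisfying the uniform Cesàro condition (the averages over long intervals are small in
norm). Then `lim_N ‖(1/N) Σ_{n=1}^N A(⌊n^c⌋)‖ = 0`. -/
theorem statement15 {E : Type*} [NormedAddCommGroup E] [NormedSpace ℝ E]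
    (c : ℝ) (hc0 : 0 < c) (hc1 : c < 1)
    (A : ℕ → E) (C : ℝ) (hA : ∀ n, ‖A n‖ ≤ C)
    (hCes : ∀ ε : ℝ, 0 < ε → ∃ L : ℕ, ∀ M N : ℕ, M + L ≤ N →
      ‖((N : ℝ) - (M : ℝ))⁻¹ • ∑ n ∈ Finset.Ico M N, A n‖ ≤ ε) :
    Tendsto (fun N : ℕ => ‖(N : ℝ)⁻¹ • ∑ n ∈ Finset.Icc 1 N, A ⌊(n : ℝ) ^ c⌋₊‖)
      atTop (nhds 0) := by
  have hK : Tendsto (fun N : ℕ => ⌊(N : ℝ) ^ c⌋₊) atTop atTop :=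
    tendsto_nat_floor_atTop.comp ((tendsto_rpow_atTop hc0).comp tendsto_natCast_atTop_atTop)
  have hratio := (tendsto_rpow_add_one_sub_rpow_add_div_rpow ((one_lt_inv₀ hc0).2 hc1)).comp
    (tendsto_natCast_atTop_atTop.comp hK)
  rw [Metric.tendsto_nhds]
  intro ε hε
  obtain ⟨H, hH, hwin⟩ := exists_window_of_uniform_cesaro hCes (half_pos hε)
  have hsmall := (hratio.const_mul (4 * H * C)).eventually
    (gt_mem_nhds (by rw [mul_zero]; exact half_pos hε))
  filter_upwards [hsmall, hK.eventually_ge_atTop 1] with N hN hK1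
  simp only [Function.comp_apply] at hN
  rw [dist_zero_right, norm_norm]
  linarith [norm_inv_smul_sum_Icc_floor_rpow_le hc0 hc1.le hA hH hwin hK1]
end

section
/- Let c be a positive non-integer. Then for every L ∈ ℕ there exists n ∈ ℕ such that ⌊(n+j)^{c}⌋ is odd for every j = 0, 1, …, L; and likewise there exists n ∈ ℕ such that ⌊(n+j)^{c}⌋ is even for every j = 0, 1, …, L. In other words, the sequence (⌊n^{c}⌋) takes odd values, and takes even values, on arbitrarily long intervals of consecutive integers. -/
/-!
The parity of `⌊n^c⌋` is read off `n^c / 2` modulo 1. With `K = ⌊c⌋`, the iterated forward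
difference `Δ^K (n^c / 2)` tends to infinity while `Δ^(K+1) (n^c / 2)` tends to zero (mean value
theorem: `Δ^i x^c = c (c-1) ⋯ (c-i+1) ξ^(c-i)` for some `ξ ∈ [x, x+i]`). A sequence that goes to
infinity in vanishing steps passes close to every residue modulo 1 and lingers there for as many
steps as we like. This property descends from `Δ v` to `v`: if `Δ v ≡ θ (mod 1)` up to `θ/2` on a
long run, then `v` advances by roughly `θ` per step modulo 1, so it still reaches every residue and
drifts by `O(Hθ)` over the next `H` steps.
-/

open Finset Filter Topology fwdDiff

lemma fwdDiff_iter_comp_addMonoidHom {M N G : Type*} [AddCommMonoid M] [AddCommMonoid N]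
    [AddCommGroup G] (φ : M →+ N) (g : N → G) (h : M) (i : ℕ) (y : M) :
    Δ_[h] ^[i] (g ∘ φ) y = Δ_[φ h] ^[i] g (φ y) := by
  simp [fwdDiff_iter_eq_sum_shift, map_add, map_nsmul]

lemma hasDerivAt_fwdDiff_iter {g g' : ℝ → ℝ} {a : ℝ}
    (hg : ∀ y, a < y → HasDerivAt g (g' y) y) (i : ℕ) {y : ℝ} (hy : a < y) :
    HasDerivAt (Δ_[1] ^[i] g) (Δ_[1] ^[i] g' y) y := by
  induction i generalizing y with
  | zero => exact hg y hy
  | succ i ih =>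
    simp only [Function.iterate_succ_apply']
    exact ((ih (by linarith)).comp_add_const y 1).sub (ih hy)

theorem exists_fwdDiff_iter_eq_iterate_deriv {f : ℝ → ℝ} {a : ℝ}
    (hf : ∀ k y, a < y → DifferentiableAt ℝ (deriv^[k] f) y) (i : ℕ) {x : ℝ} (hx : a < x) :
    ∃ ξ ∈ Set.Icc x (x + i), Δ_[1] ^[i] f x = deriv^[i] f ξ := by
  induction i generalizing f x with
  | zero => exact ⟨x, by simp, rfl⟩
  | succ i ih =>
    have hderiv : ∀ y, a < y → HasDerivAt f (deriv f y) y := fun y hy => (hf 0 y hy).hasDerivAt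
    obtain ⟨η, hη, hslope⟩ := exists_hasDerivAt_eq_slope (Δ_[1] ^[i] f) (Δ_[1] ^[i] (deriv f))
      (lt_add_one x)
      (fun y hy => (hasDerivAt_fwdDiff_iter hderiv i (hx.trans_le hy.1)).continuousAt.continuousWithinAt)
      (fun y hy => hasDerivAt_fwdDiff_iter hderiv i (hx.trans hy.1))
    obtain ⟨ξ, hξ, hξeq⟩ := ih (f := deriv f) (fun k => hf (k + 1)) (hx.trans hη.1)
    refine ⟨ξ, ⟨by linarith [hη.1, hξ.1], by push_cast; linarith [hη.2, hξ.2]⟩, ?_⟩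
    rw [Function.iterate_succ_apply', Function.iterate_succ_apply, ← hξeq, hslope]
    simp [fwdDiff]

lemma exists_fwdDiff_iter_rpow_eq (c : ℝ) (i : ℕ) {x : ℝ} (hx : 0 < x) :
    ∃ ξ ∈ Set.Icc x (x + i),
      Δ_[1] ^[i] (fun y : ℝ => y ^ c) x = (descPochhammer ℝ i).eval c * ξ ^ (c - i) := by
  have hdiff : ∀ k y, 0 < y → DifferentiableAt ℝ (deriv^[k] (fun y : ℝ => y ^ c)) y := by
    intro k y hy
    simp only [funext (Real.iter_deriv_rpow_const c · k)]
    exact ((Real.hasDerivAt_rpow_const (Or.inl hy.ne')).differentiableAt).const_mul _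
  obtain ⟨ξ, hξ, heq⟩ := exists_fwdDiff_iter_eq_iterate_deriv hdiff i hx
  exact ⟨ξ, hξ, heq.trans (Real.iter_deriv_rpow_const c ξ i)⟩

lemma tendsto_fwdDiff_iter_rpow_atTop {c : ℝ} {i : ℕ} (hi : (i : ℝ) < c) :
    Tendsto (Δ_[1] ^[i] (fun y : ℝ => y ^ c)) atTop atTop := by
  have hP : 0 < (descPochhammer ℝ i).eval c := descPochhammer_pos (by linarith)
  refine tendsto_atTop_mono' atTop ?_
    ((tendsto_rpow_atTop (sub_pos.2 hi)).const_mul_atTop hP)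
  filter_upwards [eventually_gt_atTop 0] with x hx
  obtain ⟨ξ, hξ, heq⟩ := exists_fwdDiff_iter_rpow_eq c i hx
  rw [heq]
  gcongr
  exact hξ.1

lemma tendsto_fwdDiff_iter_rpow_zero {c : ℝ} {i : ℕ} (hi : c < i) :
    Tendsto (Δ_[1] ^[i] (fun y : ℝ => y ^ c)) atTop (𝓝 0) := by
  have hlim := (tendsto_rpow_neg_atTop (sub_pos.2 hi)).const_mul |(descPochhammer ℝ i).eval c|
  rw [mul_zero] at hlim
  refine squeeze_zero_norm' ?_ hlim
  filter_upwards [eventually_gt_atTop 0] with x hx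
  obtain ⟨ξ, hξ, heq⟩ := exists_fwdDiff_iter_rpow_eq c i hx
  rw [heq, neg_sub, norm_mul, Real.norm_eq_abs, Real.norm_eq_abs,
    abs_of_nonneg (Real.rpow_nonneg (hx.le.trans hξ.1) _)]
  exact mul_le_mul_of_nonneg_left
    (Real.rpow_le_rpow_of_nonpos hx hξ.1 (sub_nonpos.2 hi.le)) (abs_nonneg _)

lemma exists_mem_Ico_le_lt_succ {α : Type*} [LinearOrder α] {w : ℕ → α} {a : α} {N : ℕ}
    (hN : w N ≤ a) : ∀ len, a < w (N + len) → ∃ n ∈ Ico N (N + len), w n ≤ a ∧ a < w (n + 1)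
  | 0, h => absurd hN (not_le.2 h)
  | len + 1, h => by
    by_cases hlen : a < w (N + len)
    · obtain ⟨n, hn, hna⟩ := exists_mem_Ico_le_lt_succ hN len hlen
      exact ⟨n, Ico_subset_Ico_right (by omega) hn, hna⟩
    · exact ⟨N + len, by simp, not_lt.1 hlen, h⟩

lemma add_mul_le_of_le_sub_succ {w : ℕ → ℝ} {N len : ℕ} {a : ℝ}
    (h : ∀ i < len, a ≤ w (N + i + 1) - w (N + i)) : w N + len * a ≤ w (N + len) := by
  have := card_nsmul_le_sum (range len) (fun i => w (N + i + 1) - w (N + i)) a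
    (fun i hi => h i (mem_range.1 hi))
  have htel := sum_range_sub (fun i => w (N + i)) len
  simp only [← add_assoc, add_zero] at htel
  rw [htel, card_range, nsmul_eq_mul] at this
  linarith

theorem exists_run_near_of_climb {w : ℕ → ℝ} {N len H : ℕ} {δ : ℝ} (t : ℝ)
    (hstep : ∀ k, N ≤ k → k < N + len + H → dist (w k) (w (k + 1)) ≤ δ)
    (hclimb : w N + 1 ≤ w (N + len)) :
    ∃ n ∈ Icc N (N + len), ∀ m ∈ Icc n (n + H), ∃ z : ℤ, |w m - z - t| ≤ (H + 1) * δ := by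
  set z := ⌈w N - t⌉
  have hlow : w N ≤ z + t := by linarith [Int.le_ceil (w N - t)]
  have hhigh : z + t < w (N + len) := by linarith [Int.ceil_lt_add_one (w N - t)]
  obtain ⟨n, hn, hwn, hwn'⟩ := exists_mem_Ico_le_lt_succ hlow len hhigh
  rw [mem_Ico] at hn
  refine ⟨n, mem_Icc.2 ⟨hn.1, hn.2.le⟩, fun m hm => ⟨z, ?_⟩⟩
  rw [mem_Icc] at hm
  have hstart : |w n - z - t| ≤ δ := by
    have := abs_le.1 (Real.dist_eq _ _ ▸ hstep n hn.1 (by omega))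
    rw [abs_le]
    constructor <;> linarith
  have hdrift : dist (w n) (w m) ≤ H * δ := by
    calc dist (w n) (w m) ≤ ∑ _ ∈ Ico n m, δ :=
          dist_le_Ico_sum_of_dist_le hm.1 fun hk hk' => hstep _ (by omega) (by omega)
      _ = (m - n : ℕ) * δ := by rw [sum_const, Nat.card_Ico, nsmul_eq_mul]
      _ ≤ H * δ := by
          gcongr
          · exact dist_nonneg.trans (hstep n hn.1 (by omega))
          · omega
  rw [Real.dist_eq, abs_sub_comm] at hdrift
  calc |w m - z - t| = |(w m - w n) + (w n - z - t)| := by ring_nf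
    _ ≤ |w m - w n| + |w n - z - t| := abs_add_le _ _
    _ ≤ (H + 1) * δ := by linarith

def HasLongRunsModOne (u : ℕ → ℝ) : Prop :=
  ∀ ε > 0, ∀ (t : ℝ) (H M : ℕ), ∃ n ≥ M, ∀ m ∈ Icc n (n + H), ∃ z : ℤ, |u m - z - t| < ε

theorem hasLongRunsModOne_of_tendsto {v : ℕ → ℝ} (hv : Tendsto v atTop atTop)
    (hΔv : Tendsto (Δ_[1] v) atTop (𝓝 0)) : HasLongRunsModOne v := by
  intro ε hε t H M
  set δ := ε / (2 * (H + 1))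
  have hδ : 0 < δ := by positivity
  obtain ⟨N₀, hN₀⟩ := Metric.tendsto_atTop.1 hΔv δ hδ
  set N := max M N₀
  obtain ⟨len, hlen⟩ := eventually_atTop.1 (tendsto_atTop.1 hv (v N + 1))
  obtain ⟨n, hn, hrun⟩ := exists_run_near_of_climb t (len := len) (H := H) (δ := δ)
    (fun k hk _ => by
      simpa [Real.dist_eq, fwdDiff, abs_sub_comm] using (hN₀ k (le_of_max_le_right hk)).le)
    (hlen _ (Nat.le_add_left _ _))
  refine ⟨n, (le_max_left _ _).trans (mem_Icc.1 hn).1, fun m hm => ?_⟩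
  obtain ⟨z, hz⟩ := hrun m hm
  refine ⟨z, hz.trans_lt ?_⟩
  simp only [δ]
  field_simp
  linarith

theorem HasLongRunsModOne.of_fwdDiff {u : ℕ → ℝ} (h : HasLongRunsModOne (Δ_[1] u)) :
    HasLongRunsModOne u := by
  intro ε hε t H M
  set θ := ε / (2 * (H + 1))
  have hθ : 0 < θ := by positivity
  obtain ⟨len, hlen⟩ := exists_nat_ge (2 / θ)
  obtain ⟨N, hNM, hN⟩ := h (θ / 2) (by positivity) θ (len + H) M
  -- `w` differs from `u` by integers and advances by `θ`, up to `θ / 2`, along the run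
  set w : ℕ → ℝ := fun m => u m - ∑ i ∈ range m, (round (Δ_[1] u i - θ) : ℝ)
  have hw_step : ∀ k ∈ Icc N (N + (len + H)), |w (k + 1) - w k - θ| < θ / 2 := by
    intro k hk
    obtain ⟨z, hz⟩ := hN k hk
    have hwk : w (k + 1) - w k - θ = (Δ_[1] u k - θ) - round (Δ_[1] u k - θ) := by
      simp only [w, sum_range_succ, fwdDiff]
      ring
    rw [hwk]
    refine (round_le _ z).trans_lt ?_
    rwa [sub_right_comm]
  have hclimb : w N + 1 ≤ w (N + len) := by
    have := add_mul_le_of_le_sub_succ (w := w) (N := N) (len := len) (a := θ / 2)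
      fun i hi => by linarith [(abs_lt.1 (hw_step (N + i) (mem_Icc.2 ⟨by omega, by omega⟩))).1]
    have : 1 ≤ len * (θ / 2) := by
      rw [div_le_iff₀ hθ] at hlen
      linarith
    linarith
  obtain ⟨n, hn, hrun⟩ := exists_run_near_of_climb t (δ := 3 * θ / 2) (H := H)
    (fun k hk hk' => by
      have := abs_lt.1 (hw_step k (mem_Icc.2 ⟨hk, by omega⟩))
      rw [Real.dist_eq, abs_sub_comm, abs_le]
      constructor <;> linarith) hclimb
  refine ⟨n, hNM.trans (mem_Icc.1 hn).1, fun m hm => ?_⟩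
  obtain ⟨z, hz⟩ := hrun m hm
  refine ⟨z + ∑ i ∈ range m, round (Δ_[1] u i - θ), ?_⟩
  have hθε : (H + 1) * (3 * θ / 2) < ε := by
    simp only [θ]
    field_simp
    linarith
  push_cast
  calc |u m - (z + ∑ i ∈ range m, (round (Δ_[1] u i - θ) : ℝ)) - t| = |w m - z - t| := by
        simp only [w]; congr 1; ring
    _ < ε := hz.trans_lt hθε

theorem HasLongRunsModOne.of_fwdDiff_iter {u : ℕ → ℝ} (k : ℕ)
    (h : HasLongRunsModOne (Δ_[1] ^[k] u)) : HasLongRunsModOne u := by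
  induction k generalizing u with
  | zero => exact h
  | succ k ih => exact (ih h).of_fwdDiff

theorem hasLongRunsModOne_mul_rpow {c r : ℝ} (hr : 0 < r) (hc₀ : 0 ≤ c) (hc : ∀ n : ℕ, c ≠ n) :
    HasLongRunsModOne (fun n : ℕ => r * (n : ℝ) ^ c) := by
  set K := ⌊c⌋₊
  have hK : (K : ℝ) < c := (Nat.floor_le hc₀).lt_of_ne (hc K).symm
  have hK' : c < (K + 1 : ℕ) := by push_cast; exact Nat.lt_floor_add_one c
  have hcomp : ∀ i, Δ_[1] ^[i] (fun n : ℕ => r * (n : ℝ) ^ c) =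
      fun n : ℕ => r * Δ_[1] ^[i] (fun y : ℝ => y ^ c) n := fun i => funext fun n => by
    have := fwdDiff_iter_comp_addMonoidHom (Nat.castAddMonoidHom ℝ) (r • fun y : ℝ => y ^ c) 1 i n
    simp only [fwdDiff_iter_const_smul, Nat.coe_castAddMonoidHom, Nat.cast_one, Pi.smul_apply,
      smul_eq_mul] at this
    exact this
  refine HasLongRunsModOne.of_fwdDiff_iter K (hasLongRunsModOne_of_tendsto ?_ ?_)
  · rw [hcomp]
    exact ((tendsto_fwdDiff_iter_rpow_atTop hK).comp tendsto_natCast_atTop_atTop).const_mul_atTop hr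
  · rw [← Function.iterate_succ_apply' (Δ_[1]), hcomp]
    simpa using ((tendsto_fwdDiff_iter_rpow_zero hK').comp tendsto_natCast_atTop_atTop).const_mul r

lemma natCast_natFloor_eq_of_abs_sub_lt {x : ℝ} {k : ℤ} (hx : 0 ≤ x) (h : |x - k - 1 / 2| < 1 / 2) :
    (⌊x⌋₊ : ℤ) = k := by
  rw [Int.natCast_floor_eq_floor hx, Int.floor_eq_iff]
  constructor <;> linarith [abs_lt.1 h]

theorem exists_run_natFloor_rpow_eq_two_mul_add {c : ℝ} (hc₀ : 0 ≤ c) (hc : ∀ n : ℕ, c ≠ n)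
    (b : ℤ) (L : ℕ) :
    ∃ n : ℕ, 0 < n ∧ ∀ j ≤ L, ∃ z : ℤ, (⌊((n + j : ℕ) : ℝ) ^ c⌋₊ : ℤ) = 2 * z + b := by
  obtain ⟨n, hn, hrun⟩ := hasLongRunsModOne_mul_rpow one_half_pos hc₀ hc (1 / 4)
    (by norm_num) ((b + 1 / 2) / 2) L 1
  refine ⟨n, hn, fun j hj => ?_⟩
  obtain ⟨z, hz⟩ := hrun (n + j) (mem_Icc.2 ⟨by omega, by omega⟩)
  refine ⟨z, natCast_natFloor_eq_of_abs_sub_lt (by positivity) ?_⟩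
  push_cast
  rw [show ((n : ℝ) + j) ^ c - (2 * z + b) - 1 / 2 =
    2 * (1 / 2 * ((n : ℝ) + j) ^ c - z - (b + 1 / 2) / 2) by ring, abs_mul, abs_two]
  push_cast at hz
  linarith

/-- For a positive non-integer `c`, the sequence `(⌊n^c⌋)` takes odd values
on arbitrarily long intervals of consecutive integers, and likewise even values. -/
theorem statement16 (c : ℝ) (hc_pos : 0 < c) (hc_nonint : ∀ k : ℤ, c ≠ (k : ℝ)) :
    ∀ L : ℕ,
      (∃ n : ℕ, 0 < n ∧ ∀ j : ℕ, j ≤ L → Odd ⌊((n + j : ℕ) : ℝ) ^ c⌋₊) ∧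
      (∃ n : ℕ, 0 < n ∧ ∀ j : ℕ, j ≤ L → Even ⌊((n + j : ℕ) : ℝ) ^ c⌋₊) := by
  intro L
  have hc : ∀ n : ℕ, c ≠ n := fun n => by exact_mod_cast hc_nonint n
  obtain ⟨n₁, hn₁, hodd⟩ := exists_run_natFloor_rpow_eq_two_mul_add hc_pos.le hc 1 L
  obtain ⟨n₀, hn₀, heven⟩ := exists_run_natFloor_rpow_eq_two_mul_add hc_pos.le hc 0 L
  refine ⟨⟨n₁, hn₁, fun j hj => ?_⟩, ⟨n₀, hn₀, fun j hj => ?_⟩⟩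
  · obtain ⟨z, hz⟩ := hodd j hj
    exact (Int.odd_coe_nat _).1 ⟨z, hz⟩
  · obtain ⟨z, hz⟩ := heven j hj
    exact (Int.even_coe_nat _).1 ⟨z, by rw [hz]; ring⟩
end

section
/- Let (a(n))_{n∈ℕ} be a sequence of integers with a(n+1) − a(n) → ∞ as n → ∞, and let k ∈ ℕ with k ≠ 1. Then there exists a thick set E ⊆ ℕ such that the equation x − k·y = a(n) has no solution with x, y ∈ E and n ∈ ℕ. -/
/-!
The set `E` is a union of blocks `[m_i, m_i + L_i]` with `L_i → ∞`, each `m_i` chosen far out.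
Since the gaps of `a` tend to infinity, far out there are windows of any prescribed radius
containing no value of `a`; each new block starts at the centre of such a window, wide enough
to contain every `x - k y` with `x` in the new block and `y` in an earlier one. When `y` lies in
the same or a later block, `k ≥ 2` makes `x - k y ≤ L_j - m_j`, which is below every `a n` once
`m_j` is large; for `k = 0` the block itself lies in its window.
-/

open Filter Set

lemma tendsto_atTop_of_tendsto_sub_atTop {a : ℕ → ℤ}
    (ha : Tendsto (fun n => a (n + 1) - a n) atTop atTop) : Tendsto a atTop atTop := by
  obtain ⟨N, hN⟩ := eventually_atTop.1 (ha.eventually_ge_atTop 1)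
  have hlin : ∀ n : ℕ, a N + n ≤ a (n + N) := by
    intro n
    induction n with
    | zero => simp
    | succ n ih =>
      have := hN (n + N) (by omega)
      rw [show n + 1 + N = n + N + 1 by omega]
      push_cast
      linarith
  exact (tendsto_add_atTop_iff_nat N).1 <|
    tendsto_atTop_mono hlin (tendsto_atTop_add_const_left _ _ tendsto_natCast_atTop_atTop)

lemma frequently_forall_lt_abs_sub {a : ℕ → ℤ}
    (ha : Tendsto (fun n => a (n + 1) - a n) atTop atTop) (W : ℕ) :
    ∃ᶠ m : ℤ in atTop, ∀ n, (W : ℤ) < |a n - m| := by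
  obtain ⟨N, hN⟩ := eventually_atTop.1 (ha.eventually_gt_atTop (2 * W + 1 : ℤ))
  have hmono : MonotoneOn a {x | N ≤ x} :=
    monotoneOn_nat_Ici_of_le_succ fun n hn => by linarith [hN n hn]
  have htop := tendsto_atTop_of_tendsto_sub_atTop ha
  have hhead : ∀ᶠ n in atTop, ∀ i ∈ Iio N, a i ≤ a n :=
    (finite_Iio N).eventually_all.2 fun i _ => htop.eventually_ge_atTop (a i)
  refine (tendsto_atTop_add_const_right _ (W + 1 : ℤ) htop).frequently_map _ ?_
    (hhead.and (eventually_ge_atTop N)).frequently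
  rintro n ⟨hhead, hNn⟩ i
  have hgap := hN n hNn
  have hi : a i ≤ a n ∨ a (n + 1) ≤ a i := by
    rcases lt_or_ge i N with hiN | hiN
    · exact .inl (hhead i hiN)
    rcases le_or_gt i n with hin | hin
    · exact .inl (hmono hiN hNn hin)
    · exact .inr (hmono (show N ≤ n + 1 by omega) hiN hin)
  rw [lt_abs]
  omega

/- A pair `p = (m, L)` stands for the block `[m, m + L]`; the second clause is what the case
`k = 0` needs. -/
def IsAdmissible (a : ℕ → ℤ) (p : ℕ × ℕ) : Prop :=
  0 < p.1 ∧ ∀ n, (p.2 : ℤ) - p.1 < a n ∧ (p.2 : ℤ) < |a n - p.1|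

/- The radius `k (p.1 + p.2) + q.2` bounds `|x - k y - q.1|` for `x` in block `q` and `y` in
block `p`. -/
def IsAdmissibleAfter (a : ℕ → ℤ) (k : ℕ) (p q : ℕ × ℕ) : Prop :=
  p.2 < q.2 ∧ p.1 + p.2 < q.1 ∧ ∀ n, ((k * (p.1 + p.2) + q.2 : ℕ) : ℤ) < |a n - q.1|

lemma exists_seq_isAdmissible {a : ℕ → ℤ}
    (ha : Tendsto (fun n => a (n + 1) - a n) atTop atTop) (k : ℕ) :
    ∃ f : ℕ → ℕ × ℕ, (∀ i, IsAdmissible a (f i)) ∧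
      ∀ i j, i < j → IsAdmissibleAfter a k (f i) (f j) := by
  obtain ⟨B, hB⟩ :=
    bddBelow_range_of_tendsto_atTop_atTop (tendsto_atTop_of_tendsto_sub_atTop ha)
  refine exists_seq_of_forall_finset_exists _ _ fun s _ => ?_
  obtain ⟨c, hc⟩ : ∃ c, ∀ p ∈ s, p.1 + p.2 ≤ c :=
    ⟨_, fun p hp => Finset.le_sup (f := fun p : ℕ × ℕ => p.1 + p.2) hp⟩
  obtain ⟨m, hgap, hm⟩ := ((frequently_forall_lt_abs_sub ha (k * c + c + 1)).and_eventually
    (eventually_ge_atTop (max (c + 1 : ℤ) (c + 2 - B)))).exists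
  lift m to ℕ using by omega
  refine ⟨(m, c + 1), ⟨by omega, fun n => ⟨?_, ?_⟩⟩, fun p hp => ?_⟩
  · have : B ≤ a n := hB ⟨n, rfl⟩
    push_cast
    omega
  · exact lt_of_le_of_lt (by exact_mod_cast (by omega : c + 1 ≤ k * c + c + 1)) (hgap n)
  · have hpc := hc p hp
    have hk : k * (p.1 + p.2) ≤ k * c := Nat.mul_le_mul_left k hpc
    refine ⟨by omega, by omega, fun n => lt_of_le_of_lt ?_ (hgap n)⟩
    exact_mod_cast (by omega : k * (p.1 + p.2) + (c + 1) ≤ k * c + c + 1)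

lemma sub_mul_ne_of_isAdmissible {a : ℕ → ℤ} {k : ℕ} (hk1 : k ≠ 1) {f : ℕ → ℕ × ℕ}
    (hf : ∀ i, IsAdmissible a (f i)) (hff : ∀ i j, i < j → IsAdmissibleAfter a k (f i) (f j))
    {i j x y : ℕ} (hx : x ∈ Icc (f i).1 ((f i).1 + (f i).2))
    (hy : y ∈ Icc (f j).1 ((f j).1 + (f j).2)) (n : ℕ) :
    (x : ℤ) - k * y ≠ a n := by
  intro h
  obtain ⟨hx1, hx2⟩ := hx
  obtain ⟨hy1, hy2⟩ := hy
  have hwindow : ∀ R : ℕ, k * y ≤ R → ((R + (f i).2 : ℕ) : ℤ) < |a n - (f i).1| → False := by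
    intro R hR hlt
    have hR' : (k : ℤ) * y ≤ R := by exact_mod_cast hR
    rw [← h, lt_abs] at hlt
    push_cast at hlt
    omega
  rcases lt_or_ge j i with hji | hij
  · exact hwindow _ (Nat.mul_le_mul_left k hy2) ((hff j i hji).2.2 n)
  obtain rfl | hk2 : k = 0 ∨ 2 ≤ k := by omega
  · exact hwindow 0 (by simp) (by simpa using ((hf i).2 n).2)
  have hxy : x ≤ y + (f j).2 := by
    rcases hij.eq_or_lt with rfl | hij
    · omega
    · have := (hff i j hij).2.1
      omega
  have hky : (2 * y : ℤ) ≤ k * y := by exact_mod_cast Nat.mul_le_mul_right y hk2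
  have := ((hf j).2 n).1
  omega

theorem statement19_general (a : ℕ → ℤ)
    (ha : Tendsto (fun n => a (n + 1) - a n) atTop atTop)
    (k : ℕ) (hk1 : k ≠ 1) :
    ∃ E : Set ℕ, (∀ x ∈ E, 0 < x) ∧
      (∀ L : ℕ, ∃ m : ℕ, 0 < m ∧ ∀ j : ℕ, j ≤ L → m + j ∈ E) ∧
      ¬ ∃ x ∈ E, ∃ y ∈ E, ∃ n : ℕ, (x : ℤ) - (k : ℤ) * (y : ℤ) = a n := by
  obtain ⟨f, hf, hff⟩ := exists_seq_isAdmissible ha k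
  refine ⟨⋃ i, Icc (f i).1 ((f i).1 + (f i).2), ?_, fun L => ?_, ?_⟩
  · simp only [mem_iUnion, mem_Icc]
    rintro x ⟨i, hx, -⟩
    exact (hf i).1.trans_le hx
  · have hL : L ≤ (f L).2 := StrictMono.id_le (fun i j h => (hff i j h).1) L
    refine ⟨(f L).1, (hf L).1, fun j hj => mem_iUnion.2 ⟨L, ?_, ?_⟩⟩ <;> omega
  · simp only [mem_iUnion]
    rintro ⟨x, ⟨i, hx⟩, y, ⟨j, hy⟩, n, h⟩
    exact sub_mul_ne_of_isAdmissible hk1 hf hff hx hy n h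

/-- If `(a(n))` is a sequence of integers with `a(n+1) − a(n) → ∞` and
`k ∈ ℕ`, `k ≠ 1`, then there is a thick set `E` of positive integers such that the equation
`x − k·y = a(n)` has no solution with `x, y ∈ E` and `n ∈ ℕ`. -/
theorem statement19 (a : ℕ → ℤ)
    (ha : Tendsto (fun n => a (n + 1) - a n) atTop atTop)
    (k : ℕ) (hk : 0 < k) (hk1 : k ≠ 1) :
    ∃ E : Set ℕ, (∀ x ∈ E, 0 < x) ∧
      (∀ L : ℕ, ∃ m : ℕ, 0 < m ∧ ∀ j : ℕ, j ≤ L → m + j ∈ E) ∧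
      ¬ ∃ x ∈ E, ∃ y ∈ E, ∃ n : ℕ, (x : ℤ) - (k : ℤ) * (y : ℤ) = a n :=
  statement19_general a ha k hk1
end
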